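/- arXiv:2001.10646 — 7 statements merged into one kernel-verified Lean document; each statement's English description precedes it below -/
import Mathlib

section
/- Let A be an additive category and B a full additive subcategory. In the additive quotient category A/B (same objects as A, morphisms quotiented by those factoring through an object of B), an object x is a retract of an object y if and only if, in A, x is a retract of y ⊕ z for some object z in B. -/
/-!
A factorisation `𝟙 x - α ≫ β = g ≫ h` through `b ∈ B` is the same thing as a retraction
`biprod.lift α g`, `biprod.desc β h` of `x` onto `y ⊞ b`. Conversely, splitting a retraction of
`y ⊞ z` along `𝟙 = fst ≫ inl + snd ≫ inr` leaves the `z`-component as the part factoring through `B`.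
-/

open CategoryTheory CategoryTheory.Limits

namespace Stmt0

variable {A : Type*} [Category A] [Preadditive A] [HasBinaryBiproducts A]

/-- A morphism factors through an object belonging to the class `B`. -/
def FactorsThru (B : Set A) {x y : A} (f : x ⟶ y) : Prop :=
  ∃ (b : A) (g : x ⟶ b) (h : b ⟶ y), b ∈ B ∧ g ≫ h = f

theorem comp_eq_fst_comp_inl_add_snd_comp_inr {x y z : A} (α : x ⟶ y ⊞ z) (β : y ⊞ z ⟶ x) :
    α ≫ β = (α ≫ biprod.fst) ≫ biprod.inl ≫ β + (α ≫ biprod.snd) ≫ biprod.inr ≫ β := by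
  conv_lhs => rw [← Category.id_comp β, ← biprod.total]
  simp only [Preadditive.add_comp, Preadditive.comp_add, Category.assoc]

theorem exists_retract_biprod_of_factorsThru {B : Set A} {x y : A} {α : x ⟶ y} {β : y ⟶ x}
    (hf : FactorsThru B (𝟙 x - α ≫ β)) :
    ∃ z, z ∈ B ∧ ∃ (α' : x ⟶ y ⊞ z) (β' : y ⊞ z ⟶ x), α' ≫ β' = 𝟙 x := by
  obtain ⟨b, g, h, hb, hgh⟩ := hf
  refine ⟨b, hb, biprod.lift α g, biprod.desc β h, ?_⟩
  rw [biprod.lift_desc, hgh, add_sub_cancel]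

theorem factorsThru_id_sub_of_comp_eq_id {B : Set A} {x y z : A} (hz : z ∈ B)
    {α : x ⟶ y ⊞ z} {β : y ⊞ z ⟶ x} (hαβ : α ≫ β = 𝟙 x) :
    FactorsThru B (𝟙 x - (α ≫ biprod.fst) ≫ biprod.inl ≫ β) := by
  refine ⟨z, α ≫ biprod.snd, biprod.inr ≫ β, hz, ?_⟩
  rw [← hαβ, comp_eq_fst_comp_inl_add_snd_comp_inr α β, add_sub_cancel_left]

/-- Retracts in `A/B` are encoded in `A`: the classes of `α` and `β` compose to the identity
exactly when `𝟙 x - α ≫ β` factors through an object of `B`. -/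
theorem retract_in_additive_quotient_general (B : Set A)
    (x y : A) :
    (∃ (α : x ⟶ y) (β : y ⟶ x), FactorsThru B (𝟙 x - α ≫ β)) ↔
      (∃ z, z ∈ B ∧ ∃ (α : x ⟶ y ⊞ z) (β : y ⊞ z ⟶ x), α ≫ β = 𝟙 x) := by
  constructor
  · rintro ⟨α, β, hf⟩
    exact exists_retract_biprod_of_factorsThru hf
  · rintro ⟨z, hz, α, β, hαβ⟩
    exact ⟨α ≫ biprod.fst, biprod.inl ≫ β, factorsThru_id_sub_of_comp_eq_id hz hαβ⟩

/-- In the additive quotient `A/B`, `x` is a retract of `y` (i.e. there are `α : x ⟶ y`,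
`β : y ⟶ x` whose classes compose to the identity, which means `𝟙 x - α ≫ β` factors
through an object of `B`) if and only if, in `A`, `x` is a retract of `y ⊞ z` for
some `z ∈ B`. -/
theorem retract_in_additive_quotient (B : Set A)
    (hB : ∀ b b', b ∈ B → b' ∈ B → (b ⊞ b' : A) ∈ B)
    (x y : A) :
    (∃ (α : x ⟶ y) (β : y ⟶ x), FactorsThru B (𝟙 x - α ≫ β)) ↔
      (∃ z, z ∈ B ∧ ∃ (α : x ⟶ y ⊞ z) (β : y ⊞ z ⟶ x), α ≫ β = 𝟙 x) :=
  retract_in_additive_quotient_general B x y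

end Stmt0
end

section
/- Let A be a Krull-Schmidt additive category and B ⊆ A a full additive subcategory closed under retracts. Then the additive quotient A/B is again Krull-Schmidt: every object of A/B is a finite direct sum of objects with local endomorphism ring. -/
/-!
The quotient functor `Q : A ⥤ A/B` is full and additive, so it maps `End x` onto `End (Q x)`;
a nonzero quotient of a local ring is local. Thus each summand `x` of a Krull-Schmidt
decomposition stays local in `A/B` unless `End (Q x) = 0`, i.e. unless `𝟙 x` factors through
`B`, which by closure under retracts means `x ∈ B`. Discarding those summands changes the
biproduct by the idempotent onto them, which factors through `B` and so vanishes in `A/B`.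
-/

open CategoryTheory CategoryTheory.Limits ZeroObject

namespace Stmt5

variable {A : Type*} [Category A] [Preadditive A] [HasZeroObject A]
  [HasBinaryBiproducts A] [HasFiniteBiproducts A]

/-- A morphism factors through an object belonging to the class `B`. -/
def FactorsThru (B : Set A) {x y : A} (f : x ⟶ y) : Prop :=
  ∃ (b : A) (g : x ⟶ b) (h : b ⟶ y), b ∈ B ∧ g ≫ h = f

theorem factorsThru_add {B : Set A}
    (hB : ∀ {b b' : A}, b ∈ B → b' ∈ B → (b ⊞ b') ∈ B)
    {x y : A} {f g : x ⟶ y} (hf : FactorsThru B f) (hg : FactorsThru B g) :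
    FactorsThru B (f + g) := by
  obtain ⟨b, p, q, hb, hpq⟩ := hf
  obtain ⟨b', p', q', hb', hpq'⟩ := hg
  exact ⟨b ⊞ b', biprod.lift p p', biprod.desc q q', hB hb hb', by
    rw [biprod.lift_desc, hpq, hpq']⟩

/-- A (nonempty) full additive subcategory of `A`, given by its class of objects,
closed under finite direct sums. -/
structure AdditiveSubcat (A : Type*) [Category A] [Preadditive A]
    [HasBinaryBiproducts A] where
  carrier : Set A
  nonempty : carrier.Nonempty
  biprod_mem : ∀ {b b' : A}, b ∈ carrier → b' ∈ carrier → (b ⊞ b') ∈ carrier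

variable (S : AdditiveSubcat A)

/-- The hom relation defining the additive quotient `A/B`: two morphisms are
identified when their difference factors through an object of `B`. -/
def AdditiveSubcat.rel (S : AdditiveSubcat A) : HomRel A :=
  fun _ _ f g => FactorsThru S.carrier (f - g)

instance : Congruence S.rel where
  equivalence := by
    refine ⟨fun f => ?_, fun {f g} h => ?_, fun {f g h} h1 h2 => ?_⟩
    · obtain ⟨b, hb⟩ := S.nonempty
      exact ⟨b, 0, 0, hb, by simp⟩
    · obtain ⟨b, p, q, hb, hpq⟩ := h
      exact ⟨b, -p, q, hb, by rw [Preadditive.neg_comp, hpq, neg_sub]⟩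
    · have := factorsThru_add S.biprod_mem h1 h2
      rwa [sub_add_sub_cancel] at this
  comp_left := by
    rintro X Y Z f g g' ⟨b, p, q, hb, hpq⟩
    exact ⟨b, f ≫ p, q, hb, by rw [Category.assoc, hpq, Preadditive.comp_sub]⟩
  comp_right := by
    rintro X Y Z f f' g ⟨b, p, q, hb, hpq⟩
    exact ⟨b, p, q ≫ g, hb, by rw [← Category.assoc, hpq, Preadditive.sub_comp]⟩

/-- The additive quotient category `A/B` is preadditive. -/
instance : Preadditive (CategoryTheory.Quotient S.rel) :=
  CategoryTheory.Quotient.preadditive S.rel (by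
    intro X Y f₁ f₂ g₁ g₂ h1 h2
    have := factorsThru_add S.biprod_mem h1 h2
    rwa [show (f₁ - f₂) + (g₁ - g₂) = (f₁ + g₁) - (f₂ + g₂) by abel] at this)

/-- An additive category is Krull-Schmidt if every object is a finite direct sum of
objects with local endomorphism rings. -/
def KrullSchmidt (A : Type*) [Category A] [Preadditive A] [HasFiniteBiproducts A] : Prop :=
  ∀ x : A, ∃ (n : ℕ) (f : Fin n → A),
    (∀ i, IsLocalRing (End (f i))) ∧ Nonempty (x ≅ ⨁ f)

theorem _root_.IsLocalRing.of_surjective_ringHom {R S : Type*} [Ring R] [IsLocalRing R] [Ring S]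
    [Nontrivial S] (f : R →+* S) (hf : Function.Surjective f) : IsLocalRing S :=
  IsLocalRing.of_isUnit_or_isUnit_one_sub_self fun b => by
    obtain ⟨a, rfl⟩ := hf b
    rw [← map_one f, ← map_sub]
    exact (IsLocalRing.isUnit_or_isUnit_of_add_one (add_sub_cancel a 1)).imp (·.map f) (·.map f)

theorem _root_.CategoryTheory.Functor.isLocalRing_end_of_full {C D : Type*} [Category C]
    [Category D] [Preadditive C] [Preadditive D] (F : C ⥤ D) [F.Full] [F.Additive] (X : C)
    [IsLocalRing (End X)] [Nontrivial (End (F.obj X))] : IsLocalRing (End (F.obj X)) :=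
  IsLocalRing.of_surjective_ringHom
    { F.mapEnd X with
      map_zero' := F.map_zero X X
      map_add' := fun _ _ => F.map_add }
    F.map_surjective

-- Index type in `Type`, not `Type*`: `biproduct.total` and `biproduct.map_eq` are stated so.
theorem _root_.CategoryTheory.Limits.biproduct.id_sub_toSubtype_fromSubtype {C : Type*}
    [Category C] [Preadditive C] [HasFiniteBiproducts C] {ι : Type} [Fintype ι] (f : ι → C)
    (p : ι → Prop) [DecidablePred p] :
    𝟙 (⨁ f) - biproduct.toSubtype f p ≫ biproduct.fromSubtype f p =
      ∑ j ∈ Finset.univ.filter (fun j => ¬ p j), biproduct.π f j ≫ biproduct.ι f j := by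
  rw [biproduct.toSubtype_fromSubtype, biproduct.map_eq, ← biproduct.total,
    ← Finset.sum_sub_distrib, Finset.sum_filter]
  refine Finset.sum_congr rfl fun j _ => ?_
  split_ifs <;> simp

theorem mem_of_factorsThru_id {C : Type*} [Category C] {B : Set C}
    (hretract : ∀ {b c : C}, b ∈ B → ∀ (s : c ⟶ b) (r : b ⟶ c), s ≫ r = 𝟙 c → c ∈ B)
    {c : C} (h : FactorsThru B (𝟙 c)) : c ∈ B :=
  let ⟨_, s, r, hb, hsr⟩ := h
  hretract hb s r hsr

theorem AdditiveSubcat.factorsThru_sum {x y : A} {ι : Type*} (s : Finset ι) (g : ι → (x ⟶ y))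
    (h : ∀ i ∈ s, FactorsThru S.carrier (g i)) : FactorsThru S.carrier (∑ i ∈ s, g i) :=
  Finset.sum_induction g _ (fun _ _ => factorsThru_add S.biprod_mem)
    (let ⟨b, hb⟩ := S.nonempty; ⟨b, 0, 0, hb, by simp⟩) h

instance : (Quotient.functor S.rel).Additive := ⟨rfl⟩

theorem nontrivial_end_quotient {y : A} (hy : ¬ FactorsThru S.carrier (𝟙 y)) :
    Nontrivial (End ((Quotient.functor S.rel).obj y)) :=
  ⟨1, 0, fun h => hy (sub_zero (𝟙 y) ▸ (Quotient.functor_map_eq_iff S.rel (𝟙 y) 0).mp h)⟩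

noncomputable def quotientBiproductIsoSubtype {ι : Type} [Fintype ι] (f : ι → A)
    (p : ι → Prop) [DecidablePred p] (hf : ∀ j, ¬ p j → f j ∈ S.carrier) :
    (Quotient.functor S.rel).obj (⨁ f) ≅
      (Quotient.functor S.rel).obj (⨁ Subtype.restrict p f) where
  hom := (Quotient.functor S.rel).map (biproduct.toSubtype f p)
  inv := (Quotient.functor S.rel).map (biproduct.fromSubtype f p)
  hom_inv_id := by
    rw [← CategoryTheory.Functor.map_comp, ← CategoryTheory.Functor.map_id]
    refine (CategoryTheory.Quotient.sound _ (show FactorsThru S.carrier (𝟙 _ - _) from ?_)).symm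
    rw [biproduct.id_sub_toSubtype_fromSubtype]
    exact S.factorsThru_sum _ _ fun j hj =>
      ⟨f j, biproduct.π f j, biproduct.ι f j, hf j (Finset.mem_filter.mp hj).2, rfl⟩
  inv_hom_id := by
    rw [← CategoryTheory.Functor.map_comp, biproduct.fromSubtype_toSubtype,
      CategoryTheory.Functor.map_id]

/-- If `A` is Krull-Schmidt and `B ⊆ A` is a full additive subcategory closed under
retracts, then the additive quotient `A/B` is again Krull-Schmidt: every object of
`A/B` is a finite direct sum of objects with local endomorphism rings. -/
theorem quotient_krullSchmidt (hKS : KrullSchmidt A)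
    (hretract : ∀ {b c : A}, b ∈ S.carrier →
      ∀ (s : c ⟶ b) (r : b ⟶ c), s ≫ r = 𝟙 c → c ∈ S.carrier) :
    ∀ x : A, ∃ (n : ℕ) (f : Fin n → A),
      (∀ i, IsLocalRing (End ((CategoryTheory.Quotient.functor S.rel).obj (f i)))) ∧
      Nonempty ((CategoryTheory.Quotient.functor S.rel).obj x ≅
        (CategoryTheory.Quotient.functor S.rel).obj (⨁ f)) := by
  classical
  intro x
  obtain ⟨n, f, hloc, ⟨e⟩⟩ := hKS x
  let Q := Quotient.functor S.rel
  let p (i : Fin n) : Prop := ¬ FactorsThru S.carrier (𝟙 (f i))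
  let σ := (Fintype.equivFin {i // p i}).symm
  have hB (i : Fin n) (hi : ¬ p i) : f i ∈ S.carrier :=
    mem_of_factorsThru_id hretract (not_not.mp hi)
  refine ⟨_, fun j => f (σ j), fun j => ?_, ⟨Q.mapIso e ≪≫ quotientBiproductIsoSubtype S f p hB ≪≫
    Q.mapIso (biproduct.whiskerEquiv σ fun _ => Iso.refl _).symm⟩⟩
  have := hloc (σ j)
  have := nontrivial_end_quotient S (σ j).2
  exact Q.isLocalRing_end_of_full _

end Stmt5
end

section
/- Let H, K ≤ G be subgroups of a finite group G, viewed as one-object groupoids. The isocomma groupoid (H/K over G) has exactly one connected component for each double coset in H\G/K, and a choice of representatives g yields an equivalence of groupoids from the disjoint union over double cosets [g] of the groups H ∩ gKg⁻¹ to (H/K over G). -/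
set_option linter.unusedSectionVars false
open CategoryTheory
namespace Stmt14
variable {G : Type} [Group G] [Finite G] (H K : Subgroup G)

def incl : SingleObj H ⥤ SingleObj G :=
  SingleObj.mapHom H G H.subtype

variable {H K}

def mkObj (g : G) : Comma (incl H) (incl K) :=
  { left := SingleObj.star H, right := SingleObj.star K, hom := g }

lemma obj_eq (X : Comma (incl H) (incl K)) : X = mkObj X.hom := rfl

def mkHom (a b : G) (h : H) (k : K) (w : b * (h : G) = (k : G) * a) :
    mkObj (H:=H) (K:=K) a ⟶ mkObj b :=
  { left := h, right := k, w := w }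

def homLeft {a b : G} (f : mkObj (H := H) (K := K) a ⟶ mkObj b) : H := f.left
def homRight {a b : G} (f : mkObj (H := H) (K := K) a ⟶ mkObj b) : K := f.right

lemma hom_w {a b : G} (f : mkObj (H := H) (K := K) a ⟶ mkObj b) :
    b * (homLeft f : G) = (homRight f : G) * a := f.w

lemma doset_of_hom {X Y : Comma (incl H) (incl K)} (f : X ⟶ Y) :
    DoubleCoset.mk H K X.hom⁻¹ = DoubleCoset.mk H K Y.hom⁻¹ := by
  rw [obj_eq X, obj_eq Y] at f
  have w := hom_w f
  rw [DoubleCoset.eq]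
  refine ⟨(homLeft f : G), (homLeft f).2, ((homRight f : G))⁻¹, K.inv_mem (homRight f).2, ?_⟩
  have key : ∀ x y h k : G, y * h = k * x → y⁻¹ = h * x⁻¹ * k⁻¹ := by
    intro x y h k hw
    have : y = k * x * h⁻¹ := by rw [← hw]; group
    rw [this]; group
  exact key _ _ _ _ w

lemma doset_of_zigzag {X Y : Comma (incl H) (incl K)} (h : Zigzag X Y) :
    DoubleCoset.mk H K X.hom⁻¹ = DoubleCoset.mk H K Y.hom⁻¹ := by
  induction h with
  | refl => rfl
  | tail _ hz ih =>
      rcases hz with ⟨⟨f⟩⟩ | ⟨⟨f⟩⟩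
      · exact ih.trans (doset_of_hom f)
      · exact ih.trans (doset_of_hom f).symm

lemma nonempty_hom {a b : G} (h : DoubleCoset.mk H K a⁻¹ = DoubleCoset.mk H K b⁻¹) :
    Nonempty (mkObj (H := H) (K := K) a ⟶ mkObj b) := by
  rw [DoubleCoset.eq] at h
  obtain ⟨x, hx, y, hy, hxy⟩ := h
  refine ⟨mkHom a b ⟨x, hx⟩ ⟨y⁻¹, K.inv_mem hy⟩ ?_⟩
  have hb : b = y⁻¹ * a * x⁻¹ := by
    have := congrArg (·⁻¹) hxy
    simpa [mul_assoc] using this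
  simp [hb, mul_assoc]

/-- inverse of a comma morphism -/
def isoOfHom {a b : G} (f : mkObj (H := H) (K := K) a ⟶ mkObj b) :
    mkObj (H := H) (K := K) a ≅ mkObj b where
  hom := f
  inv := mkHom b a (homLeft f)⁻¹ (homRight f)⁻¹ (by
    have key : ∀ x y h k : G, y * h = k * x → x * h⁻¹ = k⁻¹ * y := by
      intro x y h k hw
      have : x = k⁻¹ * (y * h) := by rw [hw]; group
      rw [this]; group
    push_cast
    exact key _ _ _ _ (hom_w f))
  hom_inv_id := by
    apply CommaMorphism.ext
    · exact inv_mul_cancel (homLeft f)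
    · exact inv_mul_cancel (homRight f)
  inv_hom_id := by
    apply CommaMorphism.ext
    · exact mul_inv_cancel (homLeft f)
    · exact mul_inv_cancel (homRight f)

section
variable (H K)
variable (rep : DoubleCoset.Quotient (H : Set G) K → G)

/-- The isotropy group at the representative. -/
abbrev S (q : DoubleCoset.Quotient (H : Set G) K) : Subgroup G :=
  H ⊓ Subgroup.map (MulAut.conj (rep q)).toMonoidHom K

lemma mem_K_of_mem_S {q : DoubleCoset.Quotient (H : Set G) K} (u : S H K rep q) :
    (rep q)⁻¹ * (u : G) * rep q ∈ K := by
  obtain ⟨-, k, hk, hku⟩ := Subgroup.mem_inf.mp u.2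
  have : (rep q)⁻¹ * (u : G) * rep q = k := by
    rw [← hku]; simp [MulAut.conj]; group
  rw [this]; exact hk

/-- morphism part of the functor from the isotropy group at `q`. -/
def FqMap (q : DoubleCoset.Quotient (H : Set G) K) (u : S H K rep q) :
    mkObj (H := H) (K := K) (rep q)⁻¹ ⟶ mkObj (rep q)⁻¹ :=
  mkHom _ _ ⟨(u : G), (Subgroup.mem_inf.mp u.2).1⟩
      ⟨(rep q)⁻¹ * (u : G) * rep q, mem_K_of_mem_S H K rep u⟩ (by group)

lemma FqMap_one (q : DoubleCoset.Quotient (H : Set G) K) :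
    FqMap H K rep q 1 = 𝟙 (mkObj (rep q)⁻¹) := by
  apply CommaMorphism.ext
  · exact Subtype.ext rfl
  · exact Subtype.ext (show (rep q)⁻¹ * ((1 : S H K rep q) : G) * rep q = (1 : G) by
      push_cast; group)

lemma FqMap_mul (q : DoubleCoset.Quotient (H : Set G) K) (u v : S H K rep q) :
    FqMap H K rep q (v * u) = FqMap H K rep q u ≫ FqMap H K rep q v := by
  apply CommaMorphism.ext
  · exact Subtype.ext rfl
  · exact Subtype.ext (show (rep q)⁻¹ * ((v : G) * (u : G)) * rep q =
      ((rep q)⁻¹ * (v : G) * rep q) * ((rep q)⁻¹ * (u : G) * rep q) by group)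

/-- The functor from the isotropy group at `q`. -/
def Fq (q : DoubleCoset.Quotient (H : Set G) K) :
    SingleObj (S H K rep q) ⥤ Comma (incl H) (incl K) where
  obj _ := mkObj (rep q)⁻¹
  map {_ _} u := FqMap H K rep q u
  map_id _ := FqMap_one H K rep q
  map_comp {_ _ _} u v := FqMap_mul H K rep q u v

/-- The assembled functor. -/
def F : (Σ q : DoubleCoset.Quotient (H : Set G) K, SingleObj (S H K rep q)) ⥤
    Comma (incl H) (incl K) :=
  Sigma.desc (Fq H K rep)

end


@[simp] lemma mkObj_hom (g : G) : (mkObj (H := H) (K := K) g).hom = g := rfl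

section
variable (H K)
variable (rep : DoubleCoset.Quotient (H : Set G) K → G)

lemma F_faithful : (F H K rep).Faithful where
  map_injective := by
    rintro ⟨q, x⟩ ⟨q', y⟩ f g h
    cases f using Sigma.SigmaHom.casesOn with | mk u =>
    cases g using Sigma.SigmaHom.casesOn with | mk v =>
    have h2 : FqMap H K rep q u = FqMap H K rep q v := h
    have h3 := congrArg (fun m => ((homLeft m : H) : G)) h2
    congr 1
    exact Subtype.ext h3

lemma F_full (hrep : ∀ q, DoubleCoset.mk H K (rep q) = q) : (F H K rep).Full where
  map_surjective := by
    rintro ⟨q, x⟩ ⟨q', y⟩ f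
    have hq : q = q' := by
      have hd : DoubleCoset.mk H K ((rep q)⁻¹)⁻¹ = DoubleCoset.mk H K ((rep q')⁻¹)⁻¹ := doset_of_hom f
      rw [inv_inv, inv_inv, hrep, hrep] at hd
      exact hd
    subst hq
    have w : (rep q)⁻¹ * ((homLeft f : H) : G) = ((homRight f : K) : G) * (rep q)⁻¹ := hom_w f
    have mem : ((homLeft f : H) : G) ∈ S H K rep q := by
      refine Subgroup.mem_inf.mpr ⟨(homLeft f : H).2,
        ⟨((homRight f : K) : G), (homRight f : K).2, ?_⟩⟩
      have key : ∀ a h k : G, a * h = k * a → a⁻¹ * k * a = h := by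
        intro a h k hw
        rw [mul_assoc, ← hw]; group
      simpa [MulAut.conj] using key _ _ _ w
    refine ⟨Sigma.SigmaHom.mk (show x ⟶ y from (⟨_, mem⟩ : S H K rep q)), ?_⟩
    apply CommaMorphism.ext
    · exact Subtype.ext rfl
    · refine Subtype.ext ?_
      show (rep q)⁻¹ * ((homLeft f : H) : G) * rep q = ((homRight f : K) : G)
      have key : ∀ a h k : G, a * h = k * a → a * h * a⁻¹ = k := by
        intro a h k hw
        rw [hw]; group
      simpa using key _ _ _ w

lemma F_essSurj (hrep : ∀ q, DoubleCoset.mk H K (rep q) = q) : (F H K rep).EssSurj where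
  mem_essImage X := by
    obtain ⟨f⟩ := nonempty_hom (H := H) (K := K)
      (a := (rep (DoubleCoset.mk H K X.hom⁻¹))⁻¹) (b := X.hom) (by rw [inv_inv, hrep])
    exact ⟨⟨DoubleCoset.mk H K X.hom⁻¹, SingleObj.star _⟩, ⟨isoOfHom f⟩⟩

def compEquiv (hrep : ∀ q, DoubleCoset.mk H K (rep q) = q) :
    ConnectedComponents (Comma (incl H) (incl K)) ≃
      DoubleCoset.Quotient (H : Set G) (K : Set G) where
  toFun := Quotient.lift (fun X => DoubleCoset.mk H K X.hom⁻¹) (fun _ _ h => doset_of_zigzag h)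
  invFun q := Quotient.mk _ (mkObj (rep q)⁻¹)
  left_inv := by
    refine Quotient.ind fun X => ?_
    apply Quotient.sound
    obtain ⟨f⟩ := nonempty_hom (H := H) (K := K)
      (a := (rep (DoubleCoset.mk H K X.hom⁻¹))⁻¹) (b := X.hom) (by rw [inv_inv, hrep])
    exact Relation.ReflTransGen.single (Or.inl ⟨f⟩)
  right_inv q := by
    show DoubleCoset.mk H K ((rep q)⁻¹)⁻¹ = q
    rw [inv_inv, hrep]

end

variable (H K)

/-- Let `H, K ≤ G` be subgroups of a finite group, viewed as one-object groupoids.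
The isocomma groupoid `(H/K over G)` has exactly one connected component for each
double coset in `H\G/K`, and a choice of representatives `g` of the double cosets
yields an equivalence of groupoids from the disjoint union, over the double cosets
`[g]`, of the groups `H ∩ gKg⁻¹` to `(H/K over G)`. -/
theorem isocomma_double_cosets
    (rep : DoubleCoset.Quotient (H : Set G) K → G)
    (hrep : ∀ q, DoubleCoset.mk H K (rep q) = q) :
    Nonempty (ConnectedComponents (Comma (incl H) (incl K)) ≃
      DoubleCoset.Quotient (H : Set G) (K : Set G)) ∧
    Nonempty ((Σ q : DoubleCoset.Quotient (H : Set G) K,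
        SingleObj ↥(H ⊓ Subgroup.map (MulAut.conj (rep q)).toMonoidHom K)) ≌
      Comma (incl H) (incl K)) := by
  constructor
  · exact ⟨compEquiv H K rep hrep⟩
  · haveI := F_faithful H K rep
    haveI := F_full H K rep hrep
    haveI := F_essSurj H K rep hrep
    haveI : (F H K rep).IsEquivalence := {}
    exact ⟨(F H K rep).asEquivalence⟩

end Stmt14
end

section
/- Given a composite of commutative squares of groupoids (with invertible 2-cells) where the bottom square and the total (pasted) square are Mackey squares, the top square is also a Mackey square. -/
open CategoryTheory

namespace Stmt15

universe u

/-- The comparison functor of a 2-cell square of groupoids: given `γ : v ⋙ i ≅ j ⋙ u`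
it sends `z` to `(v(z), j(z), γ_z)` in the isocomma groupoid `(H/K over G)`. -/
@[simps]
def comparison {L H K G : Type u} [Groupoid.{u} L] [Groupoid.{u} H] [Groupoid.{u} K]
    [Groupoid.{u} G] (v : L ⥤ H) (j : L ⥤ K) (i : H ⥤ G) (u : K ⥤ G)
    (γ : v ⋙ i ≅ j ⋙ u) : L ⥤ Comma i u where
  obj z := ⟨v.obj z, j.obj z, γ.hom.app z⟩
  map f := { left := v.map f, right := j.map f, w := γ.hom.naturality f }

/-- A square with invertible 2-cell `γ` is a Mackey square if its comparison functor
to the isocomma groupoid is an equivalence. -/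
def IsMackeySquare {L H K G : Type u} [Groupoid.{u} L] [Groupoid.{u} H] [Groupoid.{u} K]
    [Groupoid.{u} G] (v : L ⥤ H) (j : L ⥤ K) (i : H ⥤ G) (u : K ⥤ G)
    (γ : v ⋙ i ≅ j ⋙ u) : Prop :=
  (comparison v j i u γ).IsEquivalence

variable {T D L₂ A B C : Type u} [Groupoid.{u} T] [Groupoid.{u} D] [Groupoid.{u} L₂]
  [Groupoid.{u} A] [Groupoid.{u} B] [Groupoid.{u} C]

/-- The pasting functor `Comma b g ⥤ Comma c (g ⋙ d)`. -/
@[simps]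
def pasteFunctor (a : L₂ ⥤ A) (b : L₂ ⥤ B) (c : A ⥤ C) (d : B ⥤ C) (γ : a ⋙ c ≅ b ⋙ d)
    (g : D ⥤ B) : Comma b g ⥤ Comma c (g ⋙ d) where
  obj x := ⟨a.obj x.left, x.right, γ.hom.app x.left ≫ d.map x.hom⟩
  map {x y} p :=
    { left := a.map p.left
      right := p.right
      w := by
        have h1 := γ.hom.naturality p.left
        have h2 := p.w
        simp only [Functor.comp_obj, Functor.comp_map] at h1 h2 ⊢
        rw [← Category.assoc, h1, Category.assoc, ← d.map_comp, h2, d.map_comp]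
        simp }

theorem pasteFunctor_isEquivalence (a : L₂ ⥤ A) (b : L₂ ⥤ B) (c : A ⥤ C) (d : B ⥤ C)
    (γ : a ⋙ c ≅ b ⋙ d) (g : D ⥤ B) (hγ : IsMackeySquare a b c d γ) :
    (pasteFunctor a b c d γ g).IsEquivalence := by
  haveI : (comparison a b c d γ).IsEquivalence := hγ
  set K := comparison a b c d γ with hK
  haveI : (pasteFunctor a b c d γ g).Faithful := by
    constructor
    intro x y p q hpq
    have hleft : a.map p.left = a.map q.left := congrArg CommaMorphism.left hpq
    have hright : p.right = q.right := congrArg (fun m : (pasteFunctor a b c d γ g).obj x ⟶ (pasteFunctor a b c d γ g).obj y => m.right) hpq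
    have hb : b.map p.left = b.map q.left := by
      have hp := p.w
      have hq := q.w
      rw [hright] at hp
      have : b.map p.left ≫ y.hom = b.map q.left ≫ y.hom := hp.trans hq.symm
      exact (cancel_mono y.hom).1 this
    have hKmap : K.map p.left = K.map q.left := by
      apply CommaMorphism.ext
      · exact hleft
      · exact hb
    have : p.left = q.left := K.map_injective hKmap
    apply CommaMorphism.ext
    · exact this
    · exact hright
  haveI : (pasteFunctor a b c d γ g).Full := by
    constructor
    intro x y m
    -- build a morphism K.obj x.left ⟶ K.obj y.left
    let s : b.obj x.left ⟶ b.obj y.left := x.hom ≫ g.map m.right ≫ @inv _ _ _ _ y.hom (IsIso.of_groupoid _)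
    have key : ∀ {P Q R S : B} (k0 : P ⟶ Q) (k1 : Q ⟶ R) (h : S ⟶ R),
        (k0 ≫ k1 ≫ @inv _ _ _ _ h (IsIso.of_groupoid _)) ≫ h = k0 ≫ k1 := by
      intros; simp
    have key2 : ∀ {P Q R S : B} {W : C} (t : W ⟶ d.obj P) (s' : P ⟶ Q) (yh : Q ⟶ S)
        (xh : P ⟶ R) (gm : R ⟶ S), s' ≫ yh = xh ≫ gm →
        (t ≫ d.map s') ≫ d.map yh = t ≫ d.map xh ≫ d.map gm := by
      intro P Q R S W t s' yh xh gm h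
      rw [Category.assoc, ← d.map_comp, h, d.map_comp]
    have hs : s ≫ y.hom = x.hom ≫ g.map m.right := key x.hom (g.map m.right) y.hom
    have hw : c.map m.left ≫ γ.hom.app y.left = γ.hom.app x.left ≫ d.map s := by
      have hm := m.w
      simp only [pasteFunctor_obj_left, pasteFunctor_obj_right, pasteFunctor_obj_hom,
        Functor.comp_obj, Functor.comp_map] at hm
      have : c.map m.left ≫ γ.hom.app y.left ≫ d.map y.hom
          = γ.hom.app x.left ≫ d.map x.hom ≫ d.map (g.map m.right) := by
        exact hm.trans (Category.assoc _ _ _)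
      refine (cancel_mono (d.map y.hom)).1 ?_
      exact ((Category.assoc _ _ _).trans this).trans (key2 _ _ _ _ _ hs).symm
    let n : K.obj x.left ⟶ K.obj y.left := ⟨m.left, s, hw⟩
    obtain ⟨p, hp⟩ := K.map_surjective n
    have hpa : a.map p = m.left := congrArg CommaMorphism.left hp
    have hpb : b.map p = s := congrArg CommaMorphism.right hp
    refine ⟨⟨p, m.right, ?_⟩, ?_⟩
    · rw [hpb]
      exact hs
    · apply CommaMorphism.ext
      · exact hpa
      · rfl
  haveI : (pasteFunctor a b c d γ g).EssSurj := by
    constructor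
    intro w
    haveI : K.EssSurj := inferInstance
    let x := K.objPreimage (⟨w.left, g.obj w.right, w.hom⟩ : Comma c d)
    let η := K.objObjPreimageIso (⟨w.left, g.obj w.right, w.hom⟩ : Comma c d)
    have hη := η.hom.w
    simp only [comparison_obj_left, comparison_obj_right, comparison_obj_hom] at hη
    refine ⟨⟨x, w.right, η.hom.right⟩, ⟨?_⟩⟩
    refine Comma.isoMk (@asIso _ _ _ _ η.hom.left (IsIso.of_groupoid _)) (Iso.refl _) ?_
    simp only [pasteFunctor_obj_left, pasteFunctor_obj_right, pasteFunctor_obj_hom,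
      asIso_hom, Iso.refl_hom, Functor.comp_obj]
    refine hη.trans ?_
    show _ = _ ≫ (g ⋙ d).map (𝟙 w.right)
    rw [CategoryTheory.Functor.map_id]
    exact (Category.comp_id _).symm
  exact { }

/-- 2-out-of-3 for vertically pasted Mackey squares: if the bottom square `γ` and the
total pasted square are Mackey squares, then so is the top square `σ`. -/
theorem isMackeySquare_of_paste
    (a : L₂ ⥤ A) (b : L₂ ⥤ B) (c : A ⥤ C) (d : B ⥤ C) (γ : a ⋙ c ≅ b ⋙ d)
    (e : T ⥤ L₂) (f : T ⥤ D) (g : D ⥤ B) (σ : e ⋙ b ≅ f ⋙ g)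
    (hγ : IsMackeySquare a b c d γ)
    (htot : IsMackeySquare (e ⋙ a) f c (g ⋙ d)
      (Functor.isoWhiskerLeft e γ ≪≫ Functor.isoWhiskerRight σ d)) :
    IsMackeySquare e f b g σ := by
  haveI hΦ : (pasteFunctor a b c d γ g).IsEquivalence :=
    pasteFunctor_isEquivalence a b c d γ g hγ
  have hfac : comparison e f b g σ ⋙ pasteFunctor a b c d γ g
      = comparison (e ⋙ a) f c (g ⋙ d) (Functor.isoWhiskerLeft e γ ≪≫ Functor.isoWhiskerRight σ d) := rfl
  haveI : (comparison e f b g σ ⋙ pasteFunctor a b c d γ g).IsEquivalence := by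
    rw [hfac]; exact htot
  exact Functor.isEquivalence_of_comp_right (comparison e f b g σ) (pasteFunctor a b c d γ g)

end Stmt15
end

section
/- Let F: C → D and G: D → C be additive functors with G both left and right adjoint to F (an ambidextrous adjunction). If an object m ∈ C is a retract of G(n) for some n ∈ D, then the counit ε_m : G F(m) → m is a split epimorphism and the unit η_m : m → G F(m) is a split monomorphism. -/
/-!
The counit of `G ⊣ F` at an object `G n` is split by `G η_n`, and the unit of `F ⊣ G` at `G n`
is split by `G ε_n` (triangle identities). Split epimorphisms and split monomorphisms are
stable under retracts in the arrow category, and by naturality the components of a natural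
transformation at a retract of `G n` are retracts of its components at `G n`.
-/

open CategoryTheory

namespace CategoryTheory

variable {C D : Type*} [Category C] [Category D]

namespace RetractArrow

variable {X Y Z W : C} {f : X ⟶ Y} {g : Z ⟶ W}

lemma isSplitEpi (h : RetractArrow f g) [IsSplitEpi g] : IsSplitEpi f :=
  IsSplitEpi.mk' ⟨h.i.right ≫ section_ g ≫ h.r.left, by simp [h.r_w]⟩

lemma isSplitMono (h : RetractArrow f g) [IsSplitMono g] : IsSplitMono f :=
  IsSplitMono.mk' ⟨h.i.right ≫ retraction g ≫ h.r.left, by simp [← h.i_w_assoc]⟩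

end RetractArrow

namespace Adjunction

variable {L : C ⥤ D} {R : D ⥤ C}

instance isSplitEpi_counit_app_obj (adj : L ⊣ R) (Y : C) :
    IsSplitEpi (adj.counit.app (L.obj Y)) :=
  IsSplitEpi.mk' ⟨L.map (adj.unit.app Y), adj.left_triangle_components Y⟩

instance isSplitMono_unit_app_obj (adj : L ⊣ R) (Y : D) :
    IsSplitMono (adj.unit.app (R.obj Y)) :=
  IsSplitMono.mk' ⟨R.map (adj.counit.app Y), adj.right_triangle_components Y⟩

lemma isSplitEpi_counit_app_of_retract (adj : L ⊣ R) {X : D} {Y : C} (h : Retract X (L.obj Y)) :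
    IsSplitEpi (adj.counit.app X) :=
  (NatTrans.retractArrowApp adj.counit h).isSplitEpi

lemma isSplitMono_unit_app_of_retract (adj : L ⊣ R) {X : C} {Y : D} (h : Retract X (R.obj Y)) :
    IsSplitMono (adj.unit.app X) :=
  (NatTrans.retractArrowApp adj.unit h).isSplitMono

end Adjunction

end CategoryTheory

namespace Stmt17

variable {C D : Type*} [Category C] [Category D] [Preadditive C] [Preadditive D]

theorem counit_splitEpi_unit_splitMono_general
    (F : C ⥤ D) (G : D ⥤ C)
    (adj₁ : F ⊣ G) (adj₂ : G ⊣ F)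
    (m : C) (n : D)
    (hm : ∃ (α : m ⟶ G.obj n) (β : G.obj n ⟶ m), α ≫ β = 𝟙 m) :
    IsSplitEpi (adj₂.counit.app m) ∧ IsSplitMono (adj₁.unit.app m) := by
  obtain ⟨α, β, hαβ⟩ := hm
  let h : Retract m (G.obj n) := ⟨α, β, hαβ⟩
  exact ⟨adj₂.isSplitEpi_counit_app_of_retract h, adj₁.isSplitMono_unit_app_of_retract h⟩

/-- Let `F : C ⥤ D` and `G : D ⥤ C` be additive functors with `G` both left and right
adjoint to `F` (an ambidextrous adjunction). If `m ∈ C` is a retract of `G(n)` for some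
`n ∈ D`, then the counit `ε_m : G F(m) ⟶ m` (of the adjunction `G ⊣ F`) is a split
epimorphism and the unit `η_m : m ⟶ G F(m)` (of the adjunction `F ⊣ G`) is a split
monomorphism. -/
theorem counit_splitEpi_unit_splitMono
    (F : C ⥤ D) (G : D ⥤ C) [F.Additive] [G.Additive]
    (adj₁ : F ⊣ G) (adj₂ : G ⊣ F)
    (m : C) (n : D)
    (hm : ∃ (α : m ⟶ G.obj n) (β : G.obj n ⟶ m), α ≫ β = 𝟙 m) :
    IsSplitEpi (adj₂.counit.app m) ∧ IsSplitMono (adj₁.unit.app m) :=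
  counit_splitEpi_unit_splitMono_general F G adj₁ adj₂ m n hm

end Stmt17
end

section
/- Let j: D → H and k: E → H be faithful functors of finite groupoids, and M a Mackey 2-functor. If α: x → y is a morphism in M(H) with x a retract of j_*(w) for some w ∈ M(D), and α factors through an object of the form k_*(z), then α factors through an object induced from the isocomma groupoid (D/E over H), namely through (j ∘ pr₁)_*(u) for some u ∈ M(D/E over H). -/
/-!
Write `α = r ≫ g ≫ h` through the retraction `r : j_*(w) ⟶ x` and the factorisation
`x ⟶ k_*(z) ⟶ y`. By adjunction, the map `r ≫ g : j_*(w) ⟶ k_*(z)` factors through the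
counit `j_* j^* k_*(z) ⟶ k_*(z)`, and the Mackey isomorphism identifies `j^* k_*(z)` with
`(pr₁)_* pr₂^*(z)`; so `α` factors through `j_*((pr₁)_*(u))` with `u = pr₂^*(z)`.
-/

open CategoryTheory

namespace CategoryTheory

variable {C : Type*} [Category C]

def FactorsThrough {x y : C} (f : x ⟶ y) (c : C) : Prop :=
  ∃ (g : x ⟶ c) (h : c ⟶ y), g ≫ h = f

namespace FactorsThrough

theorem comp_right {x y y' : C} {f : x ⟶ y} {c : C} (hf : FactorsThrough f c) (k : y ⟶ y') :
    FactorsThrough (f ≫ k) c := by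
  obtain ⟨g, h, rfl⟩ := hf
  exact ⟨g, h ≫ k, by simp⟩

theorem of_iso {x y : C} {f : x ⟶ y} {c c' : C} (hf : FactorsThrough f c) (e : c ≅ c') :
    FactorsThrough f c' := by
  obtain ⟨g, h, rfl⟩ := hf
  exact ⟨g ≫ e.hom, e.inv ≫ h, by simp⟩

theorem of_retract {x y x' : C} {f : x ⟶ y} {c : C} {s : x ⟶ x'} {r : x' ⟶ x}
    (hsr : s ≫ r = 𝟙 x) (hf : FactorsThrough (r ≫ f) c) : FactorsThrough f c := by
  obtain ⟨g, h, hgh⟩ := hf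
  exact ⟨s ≫ g, h, by rw [Category.assoc, hgh, reassoc_of% hsr]⟩

end FactorsThrough

theorem Adjunction.factorsThrough_counit {D : Type*} [Category D] {F : C ⥤ D} {G : D ⥤ C}
    (adj : F ⊣ G) {a : C} {b : D} (f : F.obj a ⟶ b) : FactorsThrough f (F.obj (G.obj b)) :=
  ⟨F.map (adj.homEquiv a b f), adj.counit.app b, by
    rw [← adj.homEquiv_counit, Equiv.symm_apply_apply]⟩

end CategoryTheory

namespace Stmt18

/-! Abstract setting extracted from a Mackey 2-functor `M` and faithful functors
`j : D ⥤ H`, `k : E ⥤ H` of finite groupoids: `MD = M(D)`, `ME = M(E)`, `MH = M(H)`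
and `MP = M(D/E over H)` are the values of `M`; `jind = j_*`, `kind = k_*`,
`p1ind = (pr₁)_*` are the induction functors; `jres = j^*`, `p2res = pr₂^*` are
restriction functors; `adj : j_* ⊣ j^*` is the adjunction, and `mackey` is the Mackey
base-change isomorphism `j^* k_* ≅ (pr₁)_* pr₂^*` for the isocomma square of `j, k`. -/

variable {MD ME MH MP : Type*} [Category MD] [Category ME] [Category MH] [Category MP]
  [Preadditive MD] [Preadditive ME] [Preadditive MH] [Preadditive MP]

theorem factors_through_isocomma_object_general
    (jind : MD ⥤ MH) (jres : MH ⥤ MD) (kind : ME ⥤ MH)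
    (p1ind : MP ⥤ MD) (p2res : ME ⥤ MP)
    (adj : jind ⊣ jres)
    (mackey : kind ⋙ jres ≅ p2res ⋙ p1ind)
    {x y : MH} (α : x ⟶ y)
    (w : MD) (hx : ∃ (s : x ⟶ jind.obj w) (r : jind.obj w ⟶ x), s ≫ r = 𝟙 x)
    (z : ME) (hα : ∃ (g : x ⟶ kind.obj z) (h : kind.obj z ⟶ y), g ≫ h = α) :
    ∃ (u : MP) (g : x ⟶ jind.obj (p1ind.obj u)) (h : jind.obj (p1ind.obj u) ⟶ y),
      g ≫ h = α := by
  obtain ⟨s, r, hsr⟩ := hx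
  obtain ⟨g, h, rfl⟩ := hα
  have hrg : FactorsThrough (r ≫ g) (jind.obj (p1ind.obj (p2res.obj z))) :=
    (adj.factorsThrough_counit (r ≫ g)).of_iso (jind.mapIso (mackey.app z))
  refine ⟨p2res.obj z, FactorsThrough.of_retract hsr ?_⟩
  simpa only [Category.assoc] using hrg.comp_right h

/-- If `α : x ⟶ y` in `M(H)` with `x` a retract of `j_*(w)` (a `D`-object), and `α`
factors through an object `k_*(z)`, then `α` factors through an object induced from
the isocomma groupoid `(D/E over H)`, i.e. through `(j ∘ pr₁)_*(u) = j_*((pr₁)_*(u))`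
for some `u ∈ M(D/E over H)`. -/
theorem factors_through_isocomma_object
    (jind : MD ⥤ MH) (jres : MH ⥤ MD) (kind : ME ⥤ MH)
    (p1ind : MP ⥤ MD) (p2res : ME ⥤ MP)
    [jind.Additive] [jres.Additive] [kind.Additive] [p1ind.Additive] [p2res.Additive]
    (adj : jind ⊣ jres)
    (mackey : kind ⋙ jres ≅ p2res ⋙ p1ind)
    {x y : MH} (α : x ⟶ y)
    (w : MD) (hx : ∃ (s : x ⟶ jind.obj w) (r : jind.obj w ⟶ x), s ≫ r = 𝟙 x)
    (z : ME) (hα : ∃ (g : x ⟶ kind.obj z) (h : kind.obj z ⟶ y), g ≫ h = α) :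
    ∃ (u : MP) (g : x ⟶ jind.obj (p1ind.obj u)) (h : jind.obj (p1ind.obj u) ⟶ y),
      g ≫ h = α :=
  factors_through_isocomma_object_general jind jres kind p1ind p2res adj mackey α w hx z hα

end Stmt18
end

section
/- Under the hypotheses of the previous lemma, if an object x ∈ M(H) is both a retract of some j_*(w) (a D-object) and a retract of some k_*(z) (an E-object), then x is a retract of an object induced from the isocomma groupoid (D/E over H) along j ∘ pr₁. -/
open CategoryTheory

/-! Abstract setting extracted from a Mackey 2-functor `M` and faithful functors
`j : D ⥤ H`, `k : E ⥤ H` of finite groupoids: `MD = M(D)`, `ME = M(E)`, `MH = M(H)`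
and `MP = M(D/E over H)` are the values of `M`; `jind = j_*`, `kind = k_*`,
`p1ind = (pr₁)_*` are the induction functors; `jres = j^*`, `p2res = pr₂^*` are
restriction functors; `adj : j_* ⊣ j^*` is the adjunction, and `mackey` is the Mackey
base-change isomorphism `j^* k_* ≅ (pr₁)_* pr₂^*` for the isocomma square of `j, k`.

Since `x` is a retract of `j_*(w)`, the counit `j_* j^* x ⟶ x` splits, so `x` is a retract
of `j_*(j^* x)`. As `x` is a retract of `k_*(z)`, `j^* x` is a retract of
`j^* k_*(z) ≅ (pr₁)_*(pr₂^* z)`, and applying `j_*` gives the claim with `u = pr₂^* z`. -/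

namespace CategoryTheory.Retract

variable {C D : Type*} [Category C] [Category D] {F : C ⥤ D} {G : D ⥤ C}

def throughCounit (adj : F ⊣ G) {X : D} {Y : C} (h : Retract X (F.obj Y)) :
    Retract X (F.obj (G.obj X)) where
  i := h.i ≫ F.map (adj.homEquiv _ _ h.r)
  r := adj.counit.app X
  retract := by simp [Adjunction.homEquiv_unit]

end CategoryTheory.Retract

namespace Stmt19

variable {MD ME MH MP : Type*} [Category MD] [Category ME] [Category MH] [Category MP]
  [Preadditive MD] [Preadditive ME] [Preadditive MH] [Preadditive MP]

theorem retract_of_isocomma_object_general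
    (jind : MD ⥤ MH) (jres : MH ⥤ MD) (kind : ME ⥤ MH)
    (p1ind : MP ⥤ MD) (p2res : ME ⥤ MP)
    (adj : jind ⊣ jres)
    (mackey : kind ⋙ jres ≅ p2res ⋙ p1ind)
    (x : MH)
    (w : MD) (hw : ∃ (s : x ⟶ jind.obj w) (r : jind.obj w ⟶ x), s ≫ r = 𝟙 x)
    (z : ME) (hz : ∃ (s : x ⟶ kind.obj z) (r : kind.obj z ⟶ x), s ≫ r = 𝟙 x) :
    ∃ (u : MP) (s : x ⟶ jind.obj (p1ind.obj u)) (r : jind.obj (p1ind.obj u) ⟶ x),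
      s ≫ r = 𝟙 x := by
  obtain ⟨s₁, r₁, h₁⟩ := hw
  obtain ⟨s₂, r₂, h₂⟩ := hz
  let hD : Retract x (jind.obj w) := ⟨s₁, r₁, h₁⟩
  let hE : Retract x (kind.obj z) := ⟨s₂, r₂, h₂⟩
  let hres : Retract (jres.obj x) (p1ind.obj (p2res.obj z)) :=
    (hE.map jres).trans (.ofIso (mackey.app z))
  let h : Retract x (jind.obj (p1ind.obj (p2res.obj z))) :=
    (hD.throughCounit adj).trans (hres.map jind)
  exact ⟨p2res.obj z, h.i, h.r, h.retract⟩

/-- If an object `x ∈ M(H)` is both a `D`-object (a retract of some `j_*(w)`) and an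
`E`-object (a retract of some `k_*(z)`), then `x` is a retract of an object induced
from the isocomma groupoid `(D/E over H)` along `j ∘ pr₁`, i.e. of
`j_*((pr₁)_*(u))` for some `u ∈ M(D/E over H)`. -/
theorem retract_of_isocomma_object
    (jind : MD ⥤ MH) (jres : MH ⥤ MD) (kind : ME ⥤ MH)
    (p1ind : MP ⥤ MD) (p2res : ME ⥤ MP)
    [jind.Additive] [jres.Additive] [kind.Additive] [p1ind.Additive] [p2res.Additive]
    (adj : jind ⊣ jres)
    (mackey : kind ⋙ jres ≅ p2res ⋙ p1ind)
    (x : MH)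
    (w : MD) (hw : ∃ (s : x ⟶ jind.obj w) (r : jind.obj w ⟶ x), s ≫ r = 𝟙 x)
    (z : ME) (hz : ∃ (s : x ⟶ kind.obj z) (r : kind.obj z ⟶ x), s ≫ r = 𝟙 x) :
    ∃ (u : MP) (s : x ⟶ jind.obj (p1ind.obj u)) (r : jind.obj (p1ind.obj u) ⟶ x),
      s ≫ r = 𝟙 x :=
  retract_of_isocomma_object_general jind jres kind p1ind p2res adj mackey x w hw z hz

end Stmt19
end
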